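/- arXiv:1807.00849 — 4 statements merged into one kernel-verified Lean document; each statement's English description precedes it below -/
import Mathlib

section
/- For real s > 1, the Laplace transform of the fractional-part function r(x) = e^x - ⌊e^x⌋ satisfies R(s) = ∫_0^∞ r(x) e^{-sx} dx = 1/(s-1) - ζ(s)/s. -/
/-! Since `⌊e^x⌋ = #{k ≥ 1 : log k ≤ x}`, the Laplace transform of `⌊e^x⌋` is the sum over `k ≥ 1`
of `∫_{log k}^∞ e^{-sx} dx = k^{-s}/s`, that is `ζ(s)/s`, while that of `e^x` is `1/(s-1)`. -/

open Real MeasureTheory Set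

theorem tsum_ite_succ_le_eq_natFloor_mul {y : ℝ} (hy : 0 ≤ y) (c : ℝ) :
    ∑' k : ℕ, (if ((k + 1 : ℕ) : ℝ) ≤ y then c else 0) = ⌊y⌋₊ * c := by
  have hmem (k : ℕ) : ((k + 1 : ℕ) : ℝ) ≤ y ↔ k ∈ Finset.range ⌊y⌋₊ := by
    rw [Finset.mem_range, ← Nat.succ_le_iff, Nat.le_floor_iff hy]
  simp_rw [hmem]
  rw [tsum_eq_sum (s := Finset.range ⌊y⌋₊) (fun k hk => if_neg hk), Finset.sum_ite_mem,
    Finset.inter_self, Finset.sum_const, Finset.card_range, nsmul_eq_mul]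

theorem natFloor_exp_mul_eq_tsum_indicator (x c : ℝ) :
    (⌊exp x⌋₊ : ℝ) * c = ∑' k : ℕ, (Ici (log (k + 1 : ℕ))).indicator (fun _ => c) x := by
  have hlog (k : ℕ) : x ∈ Ici (log (k + 1 : ℕ)) ↔ ((k + 1 : ℕ) : ℝ) ≤ exp x := by
    rw [mem_Ici, log_le_iff_le_exp (by positivity)]
  simp only [indicator_apply, hlog]
  exact (tsum_ite_succ_le_eq_natFloor_mul (exp_pos x).le c).symm

theorem integral_Ioi_exp_neg_mul {a : ℝ} (ha : 0 < a) (c : ℝ) :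
    ∫ x in Ioi c, exp (-a * x) = exp (-a * c) / a := by
  rw [integral_exp_mul_Ioi (neg_neg_of_pos ha), neg_div_neg_eq]

theorem integral_Ici_log_exp_neg_mul {s : ℝ} (hs : 0 < s) {y : ℝ} (hy : 1 ≤ y) :
    ∫ x in Ici (log y), exp (-s * x) = y ^ (-s) / s := by
  rw [integral_Ici_eq_integral_Ioi, integral_Ioi_exp_neg_mul hs,
    rpow_def_of_pos (by linarith), mul_comm (log y)]

theorem integrableOn_natFloor_exp_mul_exp_neg {s : ℝ} (hs : 1 < s) :
    IntegrableOn (fun x => (⌊exp x⌋₊ : ℝ) * exp (-s * x)) (Ioi 0) := by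
  refine (exp_neg_integrableOn_Ioi 0 (sub_pos.2 hs)).mono'
    ((measurable_from_nat.comp (Nat.measurable_floor.comp measurable_exp)).mul
      (by fun_prop)).aestronglyMeasurable
    (Filter.Eventually.of_forall fun x => ?_)
  rw [norm_of_nonneg (by positivity), neg_sub, sub_mul, one_mul, sub_eq_add_neg, exp_add, neg_mul]
  gcongr
  exact Nat.floor_le (exp_pos x).le

theorem integral_natFloor_exp_mul_exp_neg {s : ℝ} (hs : 1 < s) :
    ∫ x in Ioi 0, (⌊exp x⌋₊ : ℝ) * exp (-s * x) = (∑' n : ℕ, ((n + 1 : ℕ) : ℝ) ^ (-s)) / s := by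
  have hs0 : 0 < s := by linarith
  set F : ℕ → ℝ → ℝ := fun k => (Ici (log (k + 1 : ℕ))).indicator (fun x => exp (-s * x))
  have hF_integral (k : ℕ) : ∫ x in Ici 0, F k x = ((k + 1 : ℕ) : ℝ) ^ (-s) / s := by
    rw [setIntegral_indicator measurableSet_Ici, Ici_inter_Ici,
      max_eq_right (log_nonneg (by simp)), integral_Ici_log_exp_neg_mul hs0 (by simp)]
  have hF_int (k : ℕ) : Integrable (F k) (volume.restrict (Ici 0)) :=
    ((integrableOn_Ici_iff_integrableOn_Ioi).2 (exp_neg_integrableOn_Ioi 0 hs0)).indicator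
      measurableSet_Ici
  have hF_sum : Summable fun k => ∫ x in Ici 0, ‖F k x‖ := by
    have hF_nonneg (k : ℕ) (x : ℝ) : 0 ≤ F k x := indicator_nonneg (fun x _ => (exp_pos _).le) x
    simp only [norm_of_nonneg (hF_nonneg _ _), hF_integral]
    exact ((summable_nat_add_iff 1).2 (summable_nat_rpow.2 (by linarith))).div_const s
  calc ∫ x in Ioi 0, (⌊exp x⌋₊ : ℝ) * exp (-s * x) = ∫ x in Ici 0, ∑' k, F k x := by
        rw [← integral_Ici_eq_integral_Ioi]
        congr 1; ext x; exact natFloor_exp_mul_eq_tsum_indicator x _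
    _ = ∑' k, ∫ x in Ici 0, F k x := (integral_tsum_of_summable_integral_norm hF_int hF_sum).symm
    _ = _ := by simp_rw [hF_integral, tsum_div_const]

theorem stmt_7 (s : ℝ) (hs : 1 < s) :
    ∫ x in Set.Ioi (0 : ℝ), (Real.exp x - ↑⌊Real.exp x⌋) * Real.exp (-s * x) =
      1 / (s - 1) - (∑' n : ℕ, ((n + 1 : ℕ) : ℝ) ^ (-s)) / s := by
  have hsplit (x : ℝ) : (exp x - ⌊exp x⌋) * exp (-s * x)
      = exp (-(s - 1) * x) - (⌊exp x⌋₊ : ℝ) * exp (-s * x) := by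
    rw [← natCast_floor_eq_intCast_floor (exp_pos x).le, sub_mul, ← exp_add]
    ring_nf
  simp_rw [hsplit]
  rw [integral_sub (exp_neg_integrableOn_Ioi 0 (sub_pos.2 hs))
      (integrableOn_natFloor_exp_mul_exp_neg hs),
    integral_Ioi_exp_neg_mul (sub_pos.2 hs), integral_natFloor_exp_mul_exp_neg hs]
  simp
end

section
/- For real s > 1, the Laplace transform of the function lie(x) = γ + log x + ∑_{k≥1} x^k/(k·k!) equals -log(s-1)/s, i.e. ∫_0^∞ lie(x) e^{-sx} dx = -(1/s)·log(s-1). -/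
/-!
Split `lie x * exp (-s x)` into the constant, the logarithm and the power series. The Laplace
transform of `1` is `1 / s`; that of `log x` is `-(γ + log s) / s`, by the substitution
`x ↦ s x` and `∫ log t e^{-t} dt = Γ'(1) = -γ`; that of the `k`-th series term
`x^(k+1) / ((k+1) (k+1)!)` is `s^(-(k+2)) / (k+1)`. The series terms are nonnegative, so these
are also their `L¹` norms; for `s > 1` they are summable, which justifies integrating term by
term, and their sum is `-(1/s) log (1 - 1/s) = (log s - log (s - 1)) / s`. The three pieces add
up to `-(1/s) log (s - 1)`.
-/

/-- `lie x = li (exp x)`, via its series representation. -/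
noncomputable def lie (x : ℝ) : ℝ :=
  Real.eulerMascheroniConstant + Real.log x +
    ∑' k : ℕ, x ^ (k + 1) / ((k + 1 : ℕ) * (k + 1).factorial)

open MeasureTheory Set Filter Real Topology
open scoped Nat

variable {s : ℝ}

theorem MeasureTheory.integrable_tsum_of_summable_integral_norm {α ι E : Type*}
    [MeasurableSpace α] {μ : Measure α} [NormedAddCommGroup E] [CompleteSpace E]
    [Countable ι] {F : ι → α → E}
    (hF_int : ∀ i, Integrable (F i) μ) (hF_sum : Summable fun i ↦ ∫ a, ‖F i a‖ ∂μ) :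
    Integrable (fun a ↦ ∑' i, F i a) μ := by
  have h_lintegral : ∑' i, ∫⁻ a, ‖F i a‖ₑ ∂μ ≠ ⊤ := by
    simp_rw [← ofReal_integral_norm_eq_lintegral_enorm (hF_int _)]
    rw [← ENNReal.ofReal_tsum_of_nonneg (fun i ↦ integral_nonneg fun a ↦ norm_nonneg _)
      hF_sum]
    exact ENNReal.ofReal_ne_top
  have h_summable : ∀ᵐ a ∂μ, Summable (F · a) := by
    refine (summable_norm_of_tsum_eLpNorm_ne_top le_rfl (fun i ↦ (hF_int i).1) ?_).mono
      fun a ha ↦ ha.of_norm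
    simpa only [eLpNorm_one_eq_lintegral_enorm] using h_lintegral
  refine ⟨aestronglyMeasurable_of_tendsto_ae atTop
    (fun s ↦ Finset.aestronglyMeasurable_fun_sum s fun i _ ↦ (hF_int i).1)
    (h_summable.mono fun a ha ↦ ha.hasSum), ?_⟩
  calc ∫⁻ a, ‖∑' i, F i a‖ₑ ∂μ ≤ ∫⁻ a, ∑' i, ‖F i a‖ₑ ∂μ :=
        lintegral_mono fun a ↦ enorm_tsum_le_tsum_enorm
    _ = ∑' i, ∫⁻ a, ‖F i a‖ₑ ∂μ := lintegral_tsum fun i ↦ (hF_int i).1.enorm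
    _ < ⊤ := h_lintegral.lt_top

theorem integral_exp_neg_mul_Ioi_zero (hs : 0 < s) :
    ∫ x in Ioi 0, exp (-s * x) = 1 / s := by
  rw [integral_exp_mul_Ioi (neg_lt_zero.2 hs), mul_zero, exp_zero]
  field_simp

theorem integral_pow_mul_exp_neg_mul_Ioi (n : ℕ) (hs : 0 < s) :
    ∫ x in Ioi 0, x ^ n * exp (-s * x) = n ! / s ^ (n + 1) := by
  have h := integral_rpow_mul_exp_neg_mul_Ioi (by positivity : (0 : ℝ) < n + 1) hs
  simp_rw [add_sub_cancel_right, rpow_natCast, ← neg_mul] at h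
  rw [h, Gamma_nat_eq_factorial, ← Nat.cast_succ, rpow_natCast, one_div_pow, one_div_mul_eq_div]

theorem integrableOn_pow_mul_exp_neg_mul_Ioi (n : ℕ) (hs : 0 < s) :
    IntegrableOn (fun x ↦ x ^ n * exp (-s * x)) (Ioi 0) :=
  .of_integral_ne_zero (by rw [integral_pow_mul_exp_neg_mul_Ioi n hs]; positivity)

theorem abs_log_le_self_add_two_mul_rpow_neg_half {x : ℝ} (hx : 0 < x) :
    |log x| ≤ x + 2 * x ^ (-(1 / 2 : ℝ)) := by
  have hupper : log x ≤ x := by simpa using log_le_rpow_div hx.le one_pos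
  have hlower : -log x ≤ 2 * x ^ (-(1 / 2 : ℝ)) := by
    have := log_le_rpow_div (inv_pos.2 hx).le one_half_pos
    rw [log_inv, inv_rpow hx.le, ← rpow_neg hx.le] at this
    linarith
  have : 0 ≤ x ^ (-(1 / 2 : ℝ)) := by positivity
  exact abs_le.2 ⟨by linarith, by linarith⟩

theorem integrableOn_log_mul_exp_neg_mul (hs : 0 < s) :
    IntegrableOn (fun x ↦ log x * exp (-s * x)) (Ioi 0) := by
  have hpow (r : ℝ) (hr : -1 < r) : IntegrableOn (fun x ↦ x ^ r * exp (-s * x)) (Ioi 0) := by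
    simpa only [rpow_one] using integrableOn_rpow_mul_exp_neg_mul_rpow hr one_pos hs
  have hbound := (hpow 1 (by norm_num)).add ((hpow (-(1 / 2)) (by norm_num)).const_mul 2)
  refine hbound.mono' (by fun_prop)
    ((ae_restrict_iff' measurableSet_Ioi).2 (.of_forall fun x hx ↦ ?_))
  simp only [Pi.add_apply, rpow_one, norm_mul, norm_eq_abs, abs_exp]
  calc |log x| * exp (-s * x) ≤ (x + 2 * x ^ (-(1 / 2 : ℝ))) * exp (-s * x) := by
        gcongr; exact abs_log_le_self_add_two_mul_rpow_neg_half hx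
    _ = x * exp (-s * x) + 2 * (x ^ (-(1 / 2 : ℝ)) * exp (-s * x)) := by rw [add_mul, mul_assoc]

theorem integral_log_mul_exp_neg :
    ∫ t in Ioi 0, log t * exp (-t) = -eulerMascheroniConstant := by
  have hGamma : Complex.GammaIntegral =ᶠ[𝓝 1] Complex.Gamma := by
    filter_upwards [(Complex.continuous_re.isOpen_preimage _ isOpen_Ioi).mem_nhds
      (by simp : (1 : ℂ) ∈ Complex.re ⁻¹' Ioi 0)] with z hz
      using (Complex.Gamma_eq_integral hz).symm
  have h := ((Complex.hasDerivAt_GammaIntegral (by simp)).congr_of_eventuallyEq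
    hGamma.symm).unique Complex.hasDerivAt_Gamma_one
  simp only [sub_self, Complex.cpow_zero, one_mul] at h
  exact_mod_cast h

theorem integral_log_mul_exp_neg_mul (hs : 0 < s) :
    ∫ x in Ioi 0, log x * exp (-s * x) = -(eulerMascheroniConstant + log s) / s := by
  have hscale : ∫ x in Ioi 0, log (s * x) * exp (-(s * x)) = -eulerMascheroniConstant / s := by
    rw [integral_comp_mul_left_Ioi (fun t ↦ log t * exp (-t)) 0 hs, mul_zero,
      integral_log_mul_exp_neg, smul_eq_mul]
    ring
  have hsplit : EqOn (fun x ↦ log (s * x) * exp (-(s * x)))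
      (fun x ↦ log s * exp (-s * x) + log x * exp (-s * x)) (Ioi 0) := fun x hx ↦ by
    simp only [log_mul hs.ne' (ne_of_gt hx), neg_mul, add_mul]
  rw [setIntegral_congr_fun measurableSet_Ioi hsplit,
    integral_add ((exp_neg_integrableOn_Ioi 0 hs).const_mul _)
      (integrableOn_log_mul_exp_neg_mul hs),
    integral_const_mul, integral_exp_neg_mul_Ioi_zero hs] at hscale
  field_simp at hscale ⊢
  linarith

noncomputable def lieSeriesTerm (k : ℕ) (x : ℝ) : ℝ :=
  x ^ (k + 1) / ((k + 1 : ℕ) * (k + 1)!)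

theorem lieSeriesTerm_nonneg (k : ℕ) {x : ℝ} (hx : 0 ≤ x) : 0 ≤ lieSeriesTerm k x := by
  unfold lieSeriesTerm; positivity

theorem integral_lieSeriesTerm_mul_exp_neg_mul (k : ℕ) (hs : 0 < s) :
    ∫ x in Ioi 0, lieSeriesTerm k x * exp (-s * x) = s⁻¹ * (s⁻¹ ^ (k + 1) / (k + 1)) := by
  simp_rw [lieSeriesTerm, div_mul_eq_mul_div]
  rw [integral_div, integral_pow_mul_exp_neg_mul_Ioi _ hs]
  push_cast
  rw [inv_pow]
  field_simp
  ring

theorem integrableOn_lieSeriesTerm_mul_exp_neg_mul (k : ℕ) (hs : 0 < s) :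
    IntegrableOn (fun x ↦ lieSeriesTerm k x * exp (-s * x)) (Ioi 0) := by
  simp_rw [lieSeriesTerm, div_mul_eq_mul_div]
  exact (integrableOn_pow_mul_exp_neg_mul_Ioi _ hs).div_const _

theorem hasSum_integral_lieSeriesTerm_mul_exp_neg_mul (hs : 1 < s) :
    HasSum (fun k ↦ ∫ x in Ioi 0, lieSeriesTerm k x * exp (-s * x))
      ((log s - log (s - 1)) / s) := by
  have hs0 : 0 < s := zero_lt_one.trans hs
  have habs : |s⁻¹| < 1 := by rw [abs_inv, abs_of_pos hs0]; exact inv_lt_one_of_one_lt₀ hs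
  simp_rw [integral_lieSeriesTerm_mul_exp_neg_mul _ hs0]
  have hlog : s⁻¹ * -log (1 - s⁻¹) = (log s - log (s - 1)) / s := by
    rw [show 1 - s⁻¹ = (s - 1) / s by field_simp, log_div (by linarith) hs0.ne']
    ring
  simpa only [hlog] using (hasSum_pow_div_log_of_abs_lt_one habs).mul_left s⁻¹

theorem summable_integral_norm_lieSeriesTerm_mul_exp_neg_mul (hs : 1 < s) :
    Summable fun k ↦ ∫ x in Ioi 0, ‖lieSeriesTerm k x * exp (-s * x)‖ := by
  have hnorm (k : ℕ) : ∫ x in Ioi 0, ‖lieSeriesTerm k x * exp (-s * x)‖ =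
      ∫ x in Ioi 0, lieSeriesTerm k x * exp (-s * x) :=
    setIntegral_congr_fun measurableSet_Ioi fun x hx ↦
      norm_of_nonneg (mul_nonneg (lieSeriesTerm_nonneg k (le_of_lt hx)) (exp_pos _).le)
  simpa only [hnorm] using (hasSum_integral_lieSeriesTerm_mul_exp_neg_mul hs).summable

theorem integrableOn_tsum_lieSeriesTerm_mul_exp_neg_mul (hs : 1 < s) :
    IntegrableOn (fun x ↦ (∑' k, lieSeriesTerm k x) * exp (-s * x)) (Ioi 0) := by
  simp_rw [← tsum_mul_right]
  exact integrable_tsum_of_summable_integral_norm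
    (fun k ↦ integrableOn_lieSeriesTerm_mul_exp_neg_mul k (zero_lt_one.trans hs))
    (summable_integral_norm_lieSeriesTerm_mul_exp_neg_mul hs)

theorem integral_tsum_lieSeriesTerm_mul_exp_neg_mul (hs : 1 < s) :
    ∫ x in Ioi 0, (∑' k, lieSeriesTerm k x) * exp (-s * x) = (log s - log (s - 1)) / s := by
  simp_rw [← tsum_mul_right]
  exact (hasSum_integral_of_summable_integral_norm
    (fun k ↦ integrableOn_lieSeriesTerm_mul_exp_neg_mul k (zero_lt_one.trans hs))
    (summable_integral_norm_lieSeriesTerm_mul_exp_neg_mul hs)).unique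
    (hasSum_integral_lieSeriesTerm_mul_exp_neg_mul hs)

theorem stmt_9 (s : ℝ) (hs : 1 < s) :
    ∫ x in Set.Ioi (0 : ℝ), lie x * Real.exp (-s * x) = -(1 / s) * Real.log (s - 1) := by
  have hs0 : 0 < s := zero_lt_one.trans hs
  have hexp := exp_neg_integrableOn_Ioi 0 hs0
  have hsplit (x : ℝ) : lie x * exp (-s * x) = eulerMascheroniConstant * exp (-s * x) +
      log x * exp (-s * x) + (∑' k, lieSeriesTerm k x) * exp (-s * x) := by
    rw [lie, add_mul, add_mul]; rfl
  have hhead : IntegrableOn (fun x ↦ eulerMascheroniConstant * exp (-s * x) +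
      log x * exp (-s * x)) (Ioi 0) := (hexp.const_mul _).add (integrableOn_log_mul_exp_neg_mul hs0)
  simp_rw [hsplit]
  rw [integral_add hhead (integrableOn_tsum_lieSeriesTerm_mul_exp_neg_mul hs),
    integral_add (hexp.const_mul _) (integrableOn_log_mul_exp_neg_mul hs0), integral_const_mul,
    integral_exp_neg_mul_Ioi_zero hs0, integral_log_mul_exp_neg_mul hs0,
    integral_tsum_lieSeriesTerm_mul_exp_neg_mul hs]
  ring
end

section
/- For every positive integer N, ∫_0^{log N} (e^x - ⌊e^x⌋) dx = (log N)/2 + (log 2π)/2 - 1 + O(1/N); more precisely the quantity ∫_0^{log N}(e^x - ⌊e^x⌋)dx - ((log N)/2 + (log 2π)/2 - 1) is bounded in absolute value by 1/(6N). -/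
open Real Filter

lemma diff12 (k : ℕ) :
    Real.log (Stirling.stirlingSeq (k+1)) - Real.log (Stirling.stirlingSeq (k+2)) ≤
      1 / (12*((k:ℝ)+1)*((k:ℝ)+2)) := by
  have hs := Stirling.log_stirlingSeq_diff_hasSum k
  set x : ℝ := (1 / (2 * ((k:ℝ) + 1) + 1)) ^ 2 with hxdef
  have hx0 : (0:ℝ) ≤ x := sq_nonneg _
  have hx1 : x < 1 := by
    rw [hxdef, one_div, inv_pow]
    exact inv_lt_one_of_one_lt₀ (one_lt_pow₀
      (by nlinarith [Nat.cast_nonneg (α:=ℝ) k] : (1:ℝ) < 2*((k:ℝ)+1)+1) two_ne_zero)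
  have hg := (hasSum_geometric_of_lt_one hx0 hx1).mul_left (x/3)
  have hb : Real.log (Stirling.stirlingSeq (k+1)) - Real.log (Stirling.stirlingSeq (k+2)) ≤
      (x/3) * (1-x)⁻¹ := by
    refine hasSum_le (fun j => ?_) hs hg
    push_cast
    rw [← hxdef]
    have h1 : ((1:ℝ) / (2 * ((j:ℝ) + 1) + 1)) ≤ 1/3 :=
      one_div_le_one_div_of_le (by norm_num)
        (by nlinarith [Nat.cast_nonneg (α:=ℝ) j] : (3:ℝ) ≤ 2*((j:ℝ)+1)+1)
    calc (1:ℝ) / (2 * ((j:ℝ) + 1) + 1) * x ^ (j+1)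
        ≤ (1/3) * x ^ (j+1) := mul_le_mul_of_nonneg_right h1 (pow_nonneg hx0 _)
      _ = x/3 * x ^ j := by rw [pow_succ]; ring
  refine hb.trans_eq ?_
  have h1x : 1 - x = (4*((k:ℝ)+1)*((k:ℝ)+2))/(2*((k:ℝ)+1)+1)^2 := by
    rw [hxdef]; field_simp; ring
  rw [h1x, hxdef]
  have hk1 : ((k:ℝ)+1) ≠ 0 := by positivity
  have hk2 : ((k:ℝ)+2) ≠ 0 := by positivity
  have hk3 : (2*((k:ℝ)+1)+1) ≠ 0 := by positivity
  field_simp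
  ring

lemma tele (k M : ℕ) :
    Real.log (Stirling.stirlingSeq (k+1)) - Real.log (Stirling.stirlingSeq (k+1+M)) ≤
      1/(12*((k:ℝ)+1)) - 1/(12*((k:ℝ)+1+M)) := by
  induction M with
  | zero => simp
  | succ M ih =>
    have hd := diff12 (k+M)
    have e2 : k+1+(M+1) = k+M+2 := by omega
    have e1 : k+1+M = k+M+1 := by omega
    rw [e2]
    rw [e1] at ih
    have hn1 : ((k:ℝ)+(M:ℝ)+1) ≠ 0 := by positivity
    have hn2 : ((k:ℝ)+(M:ℝ)+2) ≠ 0 := by positivity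
    have key : 1/(12*((k:ℝ)+(M:ℝ)+1)) - 1/(12*((k:ℝ)+(M:ℝ)+2))
        = 1/(12*((k:ℝ)+(M:ℝ)+1)*((k:ℝ)+(M:ℝ)+2)) := by
      field_simp
      ring
    push_cast at hd ih ⊢
    rw [show (k:ℝ)+1+(M:ℝ) = (k:ℝ)+(M:ℝ)+1 from by ring] at ih
    rw [show (k:ℝ)+1+((M:ℝ)+1) = (k:ℝ)+(M:ℝ)+2 from by ring]
    linarith

lemma stirling_log_bound (k : ℕ) :
    |Real.log (Stirling.stirlingSeq (k+1)) - Real.log (Real.sqrt π)| ≤ 1/(12*((k:ℝ)+1)) := by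
  have hπ : (0:ℝ) < Real.sqrt π := Real.sqrt_pos.mpr Real.pi_pos
  have hlim : Tendsto (fun n => Real.log (Stirling.stirlingSeq n)) atTop
      (nhds (Real.log (Real.sqrt π))) :=
    Stirling.tendsto_stirlingSeq_sqrt_pi.log hπ.ne'
  have hshift : Tendsto (fun M => Real.log (Stirling.stirlingSeq (k+1+M))) atTop
      (nhds (Real.log (Real.sqrt π))) := by
    have := hlim.comp (tendsto_add_atTop_nat (k+1))
    convert this using 2 with M
    simp [Function.comp, Nat.add_comm]
  have hub : Real.log (Stirling.stirlingSeq (k+1)) - Real.log (Real.sqrt π) ≤ 1/(12*((k:ℝ)+1)) := by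
    have h2 : Tendsto (fun M => Real.log (Stirling.stirlingSeq (k+1)) -
        Real.log (Stirling.stirlingSeq (k+1+M))) atTop
        (nhds (Real.log (Stirling.stirlingSeq (k+1)) - Real.log (Real.sqrt π))) :=
      tendsto_const_nhds.sub hshift
    refine le_of_tendsto h2 (Filter.Eventually.of_forall fun M => (tele k M).trans ?_)
    have : (0:ℝ) ≤ 1/(12*((k:ℝ)+1+M)) := by positivity
    linarith
  have hlb : Real.log (Real.sqrt π) ≤ Real.log (Stirling.stirlingSeq (k+1)) := by
    refine le_of_tendsto hshift (Filter.Eventually.of_forall fun M => ?_)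
    have := Stirling.log_stirlingSeq'_antitone (Nat.le_add_right k M)
    simpa [Function.comp, Nat.succ_eq_add_one, Nat.add_right_comm k M 1] using this
  rw [abs_le]
  constructor
  · have : (0:ℝ) ≤ 1/(12*((k:ℝ)+1)) := by positivity
    linarith
  · exact hub

lemma floor_exp_mono : Monotone (fun x : ℝ => ((⌊Real.exp x⌋ : ℤ) : ℝ)) := fun a b h => by
  simp only []
  exact_mod_cast Int.floor_mono (Real.exp_le_exp.mpr h)

lemma intInt (a b : ℝ) :
    IntervalIntegrable (fun x => ((⌊Real.exp x⌋ : ℤ) : ℝ)) MeasureTheory.volume a b :=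
  (floor_exp_mono.monotoneOn _).intervalIntegrable

lemma step (m : ℕ) (hm : 1 ≤ m) :
    ∫ x in (Real.log m)..(Real.log (m+1)), ((⌊Real.exp x⌋ : ℤ) : ℝ)
      = m * (Real.log (m+1) - Real.log m) := by
  have hmpos : (0:ℝ) < m := by exact_mod_cast hm
  have hlt : Real.log m < Real.log (m+1) := Real.log_lt_log hmpos (by linarith)
  have hae : ∀ᵐ x : ℝ ∂MeasureTheory.volume,
      x ∈ Set.uIoc (Real.log m) (Real.log (m+1)) → ((⌊Real.exp x⌋ : ℤ) : ℝ) = (m:ℝ) := by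
    filter_upwards [MeasureTheory.compl_mem_ae_iff.mpr
      (MeasureTheory.measure_singleton (Real.log (m+1)))] with x hx hxI
    rw [Set.uIoc_of_le hlt.le] at hxI
    have hx1 : Real.log m < x := hxI.1
    have hx2 : x < Real.log (m+1) := lt_of_le_of_ne hxI.2 (by simpa using hx)
    have he1 : (m:ℝ) ≤ Real.exp x := by
      have := Real.exp_lt_exp.mpr hx1
      rw [Real.exp_log hmpos] at this
      exact this.le
    have he2 : Real.exp x < (m:ℝ) + 1 := by
      have := Real.exp_lt_exp.mpr hx2
      rwa [Real.exp_log (by positivity)] at this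
    have : ⌊Real.exp x⌋ = (m : ℤ) := by
      rw [Int.floor_eq_iff]
      constructor
      · exact_mod_cast he1
      · push_cast; exact he2
    rw [this]; norm_num
  rw [intervalIntegral.integral_congr_ae hae, intervalIntegral.integral_const]
  rw [smul_eq_mul]; ring

lemma floor_int (N : ℕ) (hN : 1 ≤ N) :
    ∫ x in (0:ℝ)..(Real.log N), ((⌊Real.exp x⌋ : ℤ) : ℝ)
      = N * Real.log N - Real.log (Nat.factorial N) := by
  induction N with
  | zero => omega
  | succ N ih =>
    rcases Nat.lt_or_ge N 1 with h0 | h1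
    · interval_cases N
      simp
    · have hNpos : (0:ℝ) < N := by exact_mod_cast h1
      have hsplit := intervalIntegral.integral_add_adjacent_intervals
        (a := (0:ℝ)) (b := Real.log N) (c := Real.log (N+1)) (intInt _ _) (intInt _ _)
      push_cast
      rw [← hsplit, ih h1, step N h1]
      have hfact : Real.log (Nat.factorial (N+1) : ℕ) = Real.log ((N:ℝ)+1) + Real.log (Nat.factorial N : ℕ) := by
        rw [Nat.factorial_succ]
        push_cast
        rw [Real.log_mul (by positivity) (by positivity : ((Nat.factorial N : ℕ):ℝ) ≠ 0)]
      push_cast at hfact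
      rw [hfact]
      ring

theorem stmt_12 (N : ℕ) (hN : 0 < N) :
    |(∫ x in (0 : ℝ)..(Real.log N), (Real.exp x - ↑⌊Real.exp x⌋)) -
        (Real.log N / 2 + Real.log (2 * π) / 2 - 1)| ≤ 1 / (6 * N) := by
  have hNpos : (0:ℝ) < N := by exact_mod_cast hN
  have hsub : (∫ x in (0 : ℝ)..(Real.log N), (Real.exp x - ((⌊Real.exp x⌋ : ℤ) : ℝ)))
      = (∫ x in (0 : ℝ)..(Real.log N), Real.exp x)
        - ∫ x in (0 : ℝ)..(Real.log N), ((⌊Real.exp x⌋ : ℤ) : ℝ) :=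
    intervalIntegral.integral_sub (Real.continuous_exp.intervalIntegrable _ _) (intInt _ _)
  have hexp : (∫ x in (0 : ℝ)..(Real.log N), Real.exp x) = (N:ℝ) - 1 := by
    rw [integral_exp, Real.exp_log hNpos, Real.exp_zero]
  rw [hsub, hexp, floor_int N hN]
  obtain ⟨k, rfl⟩ : ∃ k, N = k + 1 := ⟨N - 1, by omega⟩
  have hb := stirling_log_bound k
  have hf := Stirling.log_stirlingSeq_formula (k+1)
  have e1 : Real.log ((((k:ℕ)+1 : ℕ):ℝ)/Real.exp 1) = Real.log (((k:ℕ)+1 : ℕ):ℝ) - 1 := by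
    rw [Real.log_div (by positivity) (Real.exp_ne_zero 1), Real.log_exp]
  have e2 : Real.log (2*(((k:ℕ)+1 : ℕ):ℝ)) = Real.log 2 + Real.log (((k:ℕ)+1 : ℕ):ℝ) :=
    Real.log_mul two_ne_zero (by positivity)
  have e3 : Real.log (Real.sqrt π) = Real.log π / 2 := Real.log_sqrt Real.pi_pos.le
  have e4 : Real.log (2*π) = Real.log 2 + Real.log π :=
    Real.log_mul two_ne_zero Real.pi_pos.ne'
  have key : ((((k:ℕ)+1:ℕ)):ℝ) - 1 - ((((k:ℕ)+1:ℕ):ℝ) * Real.log (((k:ℕ)+1:ℕ):ℝ)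
        - Real.log (Nat.factorial (k+1) : ℕ)) - (Real.log (((k:ℕ)+1:ℕ):ℝ) / 2 + Real.log (2*π) / 2 - 1)
      = Real.log (Stirling.stirlingSeq (k+1)) - Real.log (Real.sqrt π) := by
    rw [hf, e1, e2, e3, e4]
    push_cast
    ring
  push_cast at key ⊢
  rw [key]
  refine hb.trans ?_
  rw [div_le_div_iff₀ (by positivity) (by positivity)]
  push_cast
  nlinarith [Nat.cast_nonneg (α:=ℝ) k]
end

section
/- Define J(x) = ∑_{p prime, k ≥ 1, p^k ≤ x} 1/k (Riemann's prime-power counting function). Then for all x ≥ 2 and real s > 1, (1/s)·log ζ(s) = ∫_0^∞ J(e^u) e^{-su} du. -/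
/-- Riemann's prime-power counting function `J(x) = ∑_{p^k ≤ x} 1/k`,
written via `Λ(n) / log n = 1/k` for `n = p^k`. -/
noncomputable def riemannJ (x : ℝ) : ℝ :=
  ∑ n ∈ Finset.Icc 1 ⌊x⌋₊, ArithmeticFunction.vonMangoldt n / Real.log n

/-!
Both sides equal `(1/s) ∑ Λ(n) / (n^s log n)`. On the left this is the logarithm of the Euler
product of `ζ(s)`. On the right, `J(e^u) e^{-su} = ∑_{n ≤ e^u} (Λ(n)/log n) e^{-su}`, and the `n`-th
term integrates to `(Λ(n)/log n) ∫_{log n}^∞ e^{-su} du = Λ(n) / (s n^s log n)`; since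
`0 ≤ Λ(n)/log n ≤ 1`, the series `∑ n^{-s}` dominates and sum and integral may be exchanged.
-/

open Real Set MeasureTheory

theorem tsum_natCast_add_one_rpow_neg_eq_riemannZeta_re {s : ℝ} (hs : 1 < s) :
    ∑' n : ℕ, ((n + 1 : ℕ) : ℝ) ^ (-s) = (riemannZeta s).re := by
  rw [zeta_eq_tsum_one_div_nat_add_one_cpow (by simpa using hs), ← Complex.ofReal_re (∑' _, _),
    Complex.ofReal_tsum]
  congr 2 with n
  rw [Complex.ofReal_cpow (by positivity), one_div, ← Complex.cpow_neg]
  push_cast; rfl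

theorem setOf_mem_Icc_floor_exp {n : ℕ} (hn : n ≠ 0) :
    {u : ℝ | n ∈ Finset.Icc 1 ⌊exp u⌋₊} = Ici (log n) := by
  ext u
  have hn' : (0 : ℝ) < n := by positivity
  simp [Nat.one_le_iff_ne_zero.mpr hn, Nat.le_floor_iff (exp_pos u).le, log_le_iff_le_exp hn']

theorem setIntegral_Ioi_inter_Ici_log_exp_neg_mul {s x : ℝ} (hs : 0 < s) (hx : 1 ≤ x) :
    ∫ u in Ioi 0 ∩ Ici (log x), exp (-s * u) = 1 / x ^ s / s := by
  have hset : (Ioi 0 ∩ Ici (log x) : Set ℝ) =ᵐ[volume] Ici (log x) := by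
    simpa [Ici_inter_Ici, log_nonneg hx] using (Ioi_ae_eq_Ici (a := (0 : ℝ))).inter
      (Filter.EventuallyEq.rfl (f := Ici (log x)))
  rw [setIntegral_congr_set hset, integral_Ici_eq_integral_Ioi,
    integral_exp_mul_Ioi (neg_neg_of_pos hs), rpow_def_of_pos (by linarith)]
  field_simp
  rw [← exp_add]; simp

section Laplace

variable {s : ℝ} (hs : 0 < s) (a : ℝ) (n : ℕ)
include hs

theorem integrableOn_indicator_mem_Icc_floor_exp :
    IntegrableOn ({u : ℝ | n ∈ Finset.Icc 1 ⌊exp u⌋₊}.indicator fun u ↦ a * exp (-s * u))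
      (Ioi 0) := by
  rcases eq_or_ne n 0 with rfl | hn
  · simp
  · rw [setOf_mem_Icc_floor_exp hn]
    exact ((exp_neg_integrableOn_Ioi 0 hs).const_mul a).indicator measurableSet_Ici

theorem setIntegral_Ioi_indicator_mem_Icc_floor_exp :
    ∫ u in Ioi 0, {u : ℝ | n ∈ Finset.Icc 1 ⌊exp u⌋₊}.indicator (fun u ↦ a * exp (-s * u)) u =
      a / (n : ℝ) ^ s / s := by
  rcases eq_or_ne n 0 with rfl | hn
  · simp [zero_rpow hs.ne']
  · rw [setOf_mem_Icc_floor_exp hn, setIntegral_indicator measurableSet_Ici, integral_const_mul,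
      setIntegral_Ioi_inter_Ici_log_exp_neg_mul hs (mod_cast Nat.one_le_iff_ne_zero.mpr hn)]
    ring

end Laplace

theorem setIntegral_Ioi_sum_Icc_floor_exp_mul_exp (c : ℕ → ℝ) {s : ℝ} (hs : 0 < s)
    (hc : Summable fun n : ℕ ↦ ‖c n‖ / (n : ℝ) ^ s) :
    ∫ u in Ioi 0, (∑ n ∈ Finset.Icc 1 ⌊exp u⌋₊, c n) * exp (-s * u) =
      (∑' n : ℕ, c n / (n : ℝ) ^ s) / s := by
  set F : ℕ → ℝ → ℝ := fun n ↦
    {u : ℝ | n ∈ Finset.Icc 1 ⌊exp u⌋₊}.indicator fun u ↦ c n * exp (-s * u) with hF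
  have hF_sum (u : ℝ) : (∑ n ∈ Finset.Icc 1 ⌊exp u⌋₊, c n) * exp (-s * u) = ∑' n, F n u := by
    rw [Finset.sum_mul, sum_eq_tsum_indicator]
    simp [hF, Set.indicator_apply]
  have hF_norm_summable : Summable fun n ↦ ∫ u in Ioi 0, ‖F n u‖ := by
    simp only [hF, norm_indicator_eq_indicator_norm, norm_mul, norm_of_nonneg (exp_pos _).le,
      setIntegral_Ioi_indicator_mem_Icc_floor_exp hs]
    exact hc.div_const s
  rw [integral_congr_ae (Filter.Eventually.of_forall hF_sum),
    ← integral_tsum_of_summable_integral_norm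
      (fun n ↦ integrableOn_indicator_mem_Icc_floor_exp hs (c n) n) hF_norm_summable,
    ← tsum_div_const]
  exact tsum_congr fun n ↦ setIntegral_Ioi_indicator_mem_Icc_floor_exp hs (c n) n

open scoped ArithmeticFunction.vonMangoldt in
theorem abs_vonMangoldt_div_log_le_one (n : ℕ) : |Λ n / log n| ≤ 1 := by
  rcases le_or_gt n 1 with hn | hn
  · interval_cases n <;> simp
  · rw [abs_of_nonneg (div_nonneg ArithmeticFunction.vonMangoldt_nonneg (log_natCast_nonneg n)),
      div_le_one (log_pos (mod_cast hn))]
    exact ArithmeticFunction.vonMangoldt_le_log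

open scoped ArithmeticFunction.vonMangoldt in
theorem setIntegral_Ioi_riemannJ_exp_mul_exp {s : ℝ} (hs : 1 < s) :
    ∫ u in Ioi 0, riemannJ (exp u) * exp (-s * u) = (∑' n : ℕ, Λ n / (n ^ s * log n)) / s := by
  have hsum : Summable fun n : ℕ ↦ ‖Λ n / log n‖ / (n : ℝ) ^ s :=
    (summable_one_div_nat_rpow.mpr hs).of_nonneg_of_le (fun n ↦ by positivity)
      fun n ↦ div_le_div_of_nonneg_right (abs_vonMangoldt_div_log_le_one n) (by positivity)
  simp only [riemannJ, setIntegral_Ioi_sum_Icc_floor_exp_mul_exp _ (by linarith) hsum]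
  simp only [div_div, mul_comm]

theorem stmt_15 (s : ℝ) (hs : 1 < s) :
    (1 / s) * Real.log (∑' n : ℕ, ((n + 1 : ℕ) : ℝ) ^ (-s)) =
      ∫ u in Set.Ioi (0 : ℝ), riemannJ (Real.exp u) * Real.exp (-s * u) := by
  rw [tsum_natCast_add_one_rpow_neg_eq_riemannZeta_re hs, log_riemannZeta_eq hs,
    setIntegral_Ioi_riemannJ_exp_mul_exp hs, one_div_mul_eq_div]
end
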